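/- Let K, C ⊆ ℝⁿ be convex bodies with C having nonempty interior. Then K is complete with respect to C if and only if K satisfies the spherical intersection property with respect to C−C, i.e., K = ⋂_{x ∈ bd(K)} (x + (D(K,C)/2)•(C−C)), where bd(K) denotes the boundary of K. -/

import Mathlib

/-!
Write `D = D(K,C)` and `B = (D/2)(C - C)`. By duality of support functions, `D(L,C) ≤ λ` holds
exactly when `L - L ⊆ (λ/2)(C - C)`; in particular `K - K ⊆ B`, so `K` always lies in the
intersection. If `K` is complete and `y ∉ K` lies in the intersection, then `y - e ∈ B` for every
extreme point `e` of `K` (extreme points lie on the boundary), hence by Krein–Milman `y - x ∈ B`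
for all `x ∈ K`; the closed convex hull of `K ∪ {y}` then still has difference body inside `B`, so
its diameter is `D`, contradicting completeness. Conversely, if `K ⊊ K'` with `D(K',C) ≤ D`, any
`y ∈ K' \ K` satisfies `y - x ∈ K' - K' ⊆ B` for every boundary point `x` of `K`, so `y ∈ K`.
-/

open Pointwise

/-- Euclidean n-space. -/
abbrev Euc (n : ℕ) : Type := EuclideanSpace ℝ (Fin n)

/-- A convex body: a nonempty compact convex subset of ℝⁿ. -/
def IsBody {n : ℕ} (K : Set (Euc n)) : Prop := Convex ℝ K ∧ IsCompact K ∧ K.Nonempty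

/-- Support function `h(K,u) = sup_{x ∈ K} ⟨u,x⟩`. -/
noncomputable def suppF {n : ℕ} (K : Set (Euc n)) (u : Euc n) : ℝ :=
  sSup ((fun x => (inner ℝ u x : ℝ)) '' K)

/-- The s-breadth `b_s(K,C) = 2 h(K-K,s) / h(C-C,s)` (here `K - K` is the pointwise
(Minkowski) difference body). -/
noncomputable def breadthF {n : ℕ} (K C : Set (Euc n)) (s : Euc n) : ℝ :=
  2 * suppF (K - K) s / suppF (C - C) s

/-- The diameter `D(K,C) = sup_{s ≠ 0} b_s(K,C)`. -/
noncomputable def diamF {n : ℕ} (K C : Set (Euc n)) : ℝ :=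
  sSup {d : ℝ | ∃ s : Euc n, s ≠ 0 ∧ d = breadthF K C s}

/-- The minimal width `w(K,C) = inf_{s ≠ 0} b_s(K,C)`. -/
noncomputable def widthF {n : ℕ} (K C : Set (Euc n)) : ℝ :=
  sInf {d : ℝ | ∃ s : Euc n, s ≠ 0 ∧ d = breadthF K C s}

/-- The circumradius `R(K,C) = inf {λ ≥ 0 : ∃ c, K ⊆ c + λ•C}`. -/
noncomputable def circumF {n : ℕ} (K C : Set (Euc n)) : ℝ :=
  sInf {l : ℝ | 0 ≤ l ∧ ∃ c : Euc n, K ⊆ c +ᵥ l • C}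

/-- The inradius `r(K,C) = sup {λ ≥ 0 : ∃ c, c + λ•C ⊆ K}`. -/
noncomputable def inradF {n : ℕ} (K C : Set (Euc n)) : ℝ :=
  sSup {l : ℝ | 0 ≤ l ∧ ∃ c : Euc n, c +ᵥ l • C ⊆ K}

/-- `K` is (diametrically) complete with respect to `C`. -/
def CompleteWrt {n : ℕ} (K C : Set (Euc n)) : Prop :=
  ∀ K' : Set (Euc n), IsBody K' → K ⊂ K' → diamF K C < diamF K' C

/-- `K` is reduced with respect to `C`. -/
def ReducedWrt {n : ℕ} (K C : Set (Euc n)) : Prop :=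
  ∀ K' : Set (Euc n), IsBody K' → K' ⊂ K → widthF K' C < widthF K C

/-- `K` is of constant width with respect to `C`. -/
def ConstWidthWrt {n : ℕ} (K C : Set (Euc n)) : Prop := widthF K C = diamF K C

/-- `C` is perfect: every complete body is of constant width. -/
def PerfectBody {n : ℕ} (C : Set (Euc n)) : Prop :=
  ∀ K : Set (Euc n), IsBody K → CompleteWrt K C → ConstWidthWrt K C

/-- A polytope: the convex hull of finitely many points. -/
def IsPolytope {n : ℕ} (P : Set (Euc n)) : Prop :=
  ∃ V : Finset (Euc n), P = convexHull ℝ (V : Set (Euc n))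

/-- An n-simplex: the convex hull of n+1 affinely independent points. -/
def IsSimplex {n : ℕ} (S : Set (Euc n)) : Prop :=
  ∃ p : Fin (n + 1) → Euc n, AffineIndependent ℝ p ∧ S = convexHull ℝ (Set.range p)

/-- The Minkowski asymmetry `s(K) = R(-K,K)`. -/
noncomputable def minkAsym {n : ℕ} (K : Set (Euc n)) : ℝ := circumF (-K) K

/-- `K` is Minkowski-centered: `-K ⊆ s(K) • K`. -/
def MinkCentered {n : ℕ} (K : Set (Euc n)) : Prop := -K ⊆ minkAsym K • K

/-- Optimal containment `A ⊆^opt B`. -/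
def SubsetOpt {n : ℕ} (A B : Set (Euc n)) : Prop :=
  A ⊆ B ∧ ∀ ρ : ℝ, ρ < 1 → ∀ c : Euc n, ¬ (A ⊆ c +ᵥ ρ • B)

/-- The face of `P` with outer normal `a`. -/
noncomputable def faceOf {n : ℕ} (P : Set (Euc n)) (a : Euc n) : Set (Euc n) :=
  {x ∈ P | (inner ℝ a x : ℝ) = suppF P a}

/-- `F` is a facet (an (n-1)-dimensional face) of `P`. -/
def IsFacetOf {n : ℕ} (P F : Set (Euc n)) : Prop :=
  ∃ a : Euc n, a ≠ 0 ∧ F = faceOf P a ∧ Module.finrank ℝ (vectorSpan ℝ F) = n - 1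

/-- `Kstar` is a completion of `K` with respect to `C`. -/
def IsCompletionOf {n : ℕ} (Kstar K C : Set (Euc n)) : Prop :=
  IsBody Kstar ∧ K ⊆ Kstar ∧ diamF Kstar C = diamF K C ∧ CompleteWrt Kstar C

open Set

section Pointwise

variable {G : Type*} [AddCommGroup G]

lemma mem_iInter_vadd_iff {S B : Set G} {y : G} :
    y ∈ ⋂ x ∈ S, x +ᵥ B ↔ ∀ x ∈ S, y - x ∈ B := by
  simp only [mem_iInter, mem_vadd_set_iff_neg_vadd_mem, vadd_eq_add, neg_add_eq_sub]

lemma insert_sub_insert_subset {A B : Set G} {y : G} (hA : A - A ⊆ B) (h0 : 0 ∈ B)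
    (hB : -B = B) (hy : ∀ x ∈ A, y - x ∈ B) : insert y A - insert y A ⊆ B := by
  rintro _ ⟨a, ha, b, hb, rfl⟩
  rcases ha with rfl | ha <;> rcases hb with rfl | hb
  · simpa using h0
  · exact hy b hb
  · rw [← hB, mem_neg, neg_sub]
    exact hy a ha
  · exact hA (sub_mem_sub ha hb)

lemma neg_smul_sub_self {M : Type*} [AddCommGroup M] [Module ℝ M] (c : ℝ) (C : Set M) :
    -(c • (C - C)) = c • (C - C) := by
  rw [← smul_set_neg, neg_sub]

lemma zero_mem_smul_sub_self {M : Type*} [AddCommGroup M] [Module ℝ M] (c : ℝ) {C : Set M}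
    (hC : C.Nonempty) : (0 : M) ∈ c • (C - C) := by
  obtain ⟨x, hx⟩ := hC
  simpa using smul_mem_smul_set (a := c) (sub_mem_sub hx hx)

lemma IsCompact.sub [TopologicalSpace G] [IsTopologicalAddGroup G] {A B : Set G}
    (hA : IsCompact A) (hB : IsCompact B) : IsCompact (A - B) := by
  rw [sub_eq_add_neg]
  exact hA.add hB.neg

end Pointwise

section Convex

variable {E : Type*} [NormedAddCommGroup E] [NormedSpace ℝ E]

lemma closure_convexHull_sub_self_subset {A B : Set E} (hB : Convex ℝ B) (hBc : IsClosed B)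
    (h : A - A ⊆ B) : closure (convexHull ℝ A) - closure (convexHull ℝ A) ⊆ B := by
  have hprod : closure (convexHull ℝ A) ×ˢ closure (convexHull ℝ A) ⊆
      {p : E × E | p.1 - p.2 ∈ B} := by
    rw [← closure_prod_eq, ← convexHull_prod]
    refine closure_minimal (convexHull_min ?_ ?_) (hBc.preimage (continuous_fst.sub continuous_snd))
    · rintro ⟨a, b⟩ ⟨ha, hb⟩
      exact h (sub_mem_sub ha hb)
    · exact hB.linear_preimage ((LinearMap.fst ℝ E E) - LinearMap.snd ℝ E E)
  rintro _ ⟨a, ha, b, hb, rfl⟩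
  exact hprod (mk_mem_prod ha hb)

lemma Convex.subset_of_frontier_subset [Nontrivial E] {K S : Set E} (hKc : Convex ℝ K)
    (hK : IsCompact K) (hS : Convex ℝ S) (hSc : IsClosed S) (h : frontier K ⊆ S) : K ⊆ S := by
  have hext : K.extremePoints ℝ ⊆ frontier K := fun e he =>
    ⟨subset_closure (extremePoints_subset he),
      fun hint => disjoint_left.1 (disjoint_interior_extremePoints K) hint he⟩
  rw [← closure_convexHull_extremePoints hK hKc]
  exact closure_minimal (convexHull_min (hext.trans h) hS) hSc

lemma forall_sub_mem_of_mem_iInter_frontier {K B : Set E} (hKc : Convex ℝ K) (hK : IsCompact K)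
    (hB : Convex ℝ B) (hBc : IsClosed B) {y : E} (hy : y ∈ ⋂ x ∈ frontier K, x +ᵥ B)
    (hyK : y ∉ K) : ∀ x ∈ K, y - x ∈ B := by
  rcases subsingleton_or_nontrivial E with _ | _
  · exact fun x hx => absurd (Subsingleton.elim x y ▸ hx) hyK
  have hS : {x | y - x ∈ B} = y +ᵥ -B := by
    ext x
    simp [mem_vadd_set_iff_neg_vadd_mem, neg_add_eq_sub]
  refine hKc.subset_of_frontier_subset (S := {x | y - x ∈ B}) hK (hS ▸ hB.neg.vadd y)
    (hBc.preimage (continuous_const.sub continuous_id)) (mem_iInter_vadd_iff.1 hy)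

lemma ssubset_closure_convexHull_insert {K : Set E} {y : E} (hy : y ∉ K) :
    K ⊂ closure (convexHull ℝ (insert y K)) :=
  (ssubset_insert hy).trans_subset ((subset_convexHull ℝ _).trans subset_closure)

end Convex

section SupportFunction

variable {n : ℕ}

lemma bddAbove_inner_image {K : Set (Euc n)} (hK : IsCompact K) (s : Euc n) :
    BddAbove ((fun x => (inner ℝ s x : ℝ)) '' K) :=
  (hK.image (continuous_const.inner continuous_id)).bddAbove

lemma inner_le_suppF {K : Set (Euc n)} (hK : IsCompact K) {x : Euc n} (hx : x ∈ K) (s : Euc n) :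
    (inner ℝ s x : ℝ) ≤ suppF K s :=
  le_csSup (bddAbove_inner_image hK s) (mem_image_of_mem _ hx)

lemma suppF_le {K : Set (Euc n)} (hne : K.Nonempty) {s : Euc n} {a : ℝ}
    (h : ∀ x ∈ K, (inner ℝ s x : ℝ) ≤ a) : suppF K s ≤ a :=
  csSup_le (hne.image _) (by rintro _ ⟨x, hx, rfl⟩; exact h x hx)

lemma suppF_mono {K K' : Set (Euc n)} (hK : K.Nonempty) (hK' : IsCompact K') (h : K ⊆ K')
    (s : Euc n) : suppF K s ≤ suppF K' s :=
  suppF_le hK fun _ hx => inner_le_suppF hK' (h hx) s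

lemma suppF_smul {A : Set (Euc n)} {c : ℝ} (hc : 0 ≤ c) (s : Euc n) :
    suppF (c • A) s = c * suppF A s := by
  have : (fun x => (inner ℝ s x : ℝ)) '' (c • A) = c • ((fun x => (inner ℝ s x : ℝ)) '' A) := by
    rw [← image_smul, ← image_smul, image_image, image_image]
    simp_rw [real_inner_smul_right, smul_eq_mul]
  rw [suppF, this, Real.sSup_smul_of_nonneg hc]
  rfl

lemma mem_iff_forall_inner_le_suppF {B : Set (Euc n)} (hB : IsCompact B) (hBc : Convex ℝ B)
    (hBne : B.Nonempty) {y : Euc n} : y ∈ B ↔ ∀ s : Euc n, (inner ℝ s y : ℝ) ≤ suppF B s := by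
  refine ⟨fun hy s => inner_le_suppF hB hy s, fun h => by_contra fun hy => ?_⟩
  obtain ⟨f, u, hfB, hfy⟩ := geometric_hahn_banach_closed_point hBc hB.isClosed hy
  set s := (InnerProductSpace.toDual ℝ (Euc n)).symm f
  have hs : ∀ x, (inner ℝ s x : ℝ) = f x := fun x => InnerProductSpace.toDual_symm_apply
  have hBu : suppF B s ≤ u := suppF_le hBne fun x hx => (hs x ▸ hfB x hx).le
  linarith [h s, hs y]

lemma suppF_sub_self_nonneg {A : Set (Euc n)} (hA : IsCompact A) (hne : A.Nonempty)
    (s : Euc n) : 0 ≤ suppF (A - A) s := by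
  obtain ⟨a, ha⟩ := hne
  simpa using inner_le_suppF (hA.sub hA) (sub_mem_sub ha ha) s

end SupportFunction

section Diameter

variable {n : ℕ}

lemma isBody_closure_convexHull_insert {K : Set (Euc n)} (hK : IsCompact K) (y : Euc n) :
    IsBody (closure (convexHull ℝ (insert y K))) :=
  ⟨(convex_convexHull ℝ _).closure,
    (isBounded_convexHull.2 (hK.insert y).isBounded).isCompact_closure,
    (insert_nonempty y K).convexHull.closure⟩

lemma exists_pos_mul_norm_le_suppF_sub_self {C : Set (Euc n)} (hC : IsCompact C)
    (hCint : (interior C).Nonempty) : ∃ r > 0, ∀ s : Euc n, r * ‖s‖ ≤ suppF (C - C) s := by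
  obtain ⟨c, hc⟩ := hCint
  obtain ⟨r, hr, hball⟩ := Metric.nhds_basis_closedBall.mem_iff.1 (mem_interior_iff_mem_nhds.1 hc)
  refine ⟨r, hr, fun s => ?_⟩
  rcases eq_or_ne s 0 with rfl | hs
  · simpa using suppF_sub_self_nonneg hC ⟨c, interior_subset hc⟩ 0
  have hsn : 0 < ‖s‖ := norm_pos_iff.2 hs
  set x := c + (r / ‖s‖) • s
  have hxC : x ∈ C := hball <| by
    rw [Metric.mem_closedBall, dist_eq_norm, add_sub_cancel_left, norm_smul, Real.norm_eq_abs,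
      abs_of_pos (by positivity), div_mul_cancel₀ _ hsn.ne']
  calc r * ‖s‖ = (inner ℝ s (x - c) : ℝ) := by
        rw [add_sub_cancel_left, real_inner_smul_right, real_inner_self_eq_norm_sq]
        field_simp
    _ ≤ suppF (C - C) s := inner_le_suppF (hC.sub hC) (sub_mem_sub hxC (interior_subset hc)) s

lemma suppF_sub_self_pos {C : Set (Euc n)} (hC : IsCompact C) (hCint : (interior C).Nonempty)
    {s : Euc n} (hs : s ≠ 0) : 0 < suppF (C - C) s := by
  obtain ⟨r, hr, h⟩ := exists_pos_mul_norm_le_suppF_sub_self hC hCint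
  exact (mul_pos hr (norm_pos_iff.2 hs)).trans_le (h s)

lemma bddAbove_breadthF {K C : Set (Euc n)} (hK : IsCompact K) (hKne : K.Nonempty)
    (hC : IsCompact C) (hCint : (interior C).Nonempty) :
    BddAbove {d : ℝ | ∃ s : Euc n, s ≠ 0 ∧ d = breadthF K C s} := by
  obtain ⟨r, hr, hCs⟩ := exists_pos_mul_norm_le_suppF_sub_self hC hCint
  obtain ⟨M, hM⟩ := (hK.sub hK).isBounded.subset_closedBall 0
  have hKKne : (K - K).Nonempty := hKne.sub hKne
  have hM0 : 0 ≤ M := Metric.nonempty_closedBall.1 (hKKne.mono hM)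
  refine ⟨2 * M / r, ?_⟩
  rintro _ ⟨s, hs, rfl⟩
  have hsn : 0 < ‖s‖ := norm_pos_iff.2 hs
  have hKs : suppF (K - K) s ≤ M * ‖s‖ := suppF_le hKKne fun x hx =>
    (real_inner_le_norm s x).trans <| by
      rw [mul_comm]
      exact mul_le_mul_of_nonneg_right (mem_closedBall_zero_iff.1 (hM hx)) (norm_nonneg s)
  calc breadthF K C s ≤ 2 * (M * ‖s‖) / (r * ‖s‖) :=
        div_le_div₀ (by positivity) (by linarith) (by positivity) (hCs s)
    _ = 2 * M / r := by field_simp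

lemma breadthF_le_diamF {K C : Set (Euc n)} (hK : IsCompact K) (hKne : K.Nonempty)
    (hC : IsCompact C) (hCint : (interior C).Nonempty) {s : Euc n} (hs : s ≠ 0) :
    breadthF K C s ≤ diamF K C :=
  le_csSup (bddAbove_breadthF hK hKne hC hCint) ⟨s, hs, rfl⟩

lemma diamF_nonneg {K C : Set (Euc n)} (hK : IsCompact K) (hKne : K.Nonempty)
    (hC : IsCompact C) (hCne : C.Nonempty) : 0 ≤ diamF K C :=
  Real.sSup_nonneg <| by
    rintro _ ⟨s, -, rfl⟩
    exact div_nonneg (mul_nonneg zero_le_two (suppF_sub_self_nonneg hK hKne s))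
      (suppF_sub_self_nonneg hC hCne s)

lemma diamF_le_iff_sub_self_subset {K C : Set (Euc n)} (hK : IsCompact K) (hKne : K.Nonempty)
    (hC : IsCompact C) (hCc : Convex ℝ C) (hCint : (interior C).Nonempty) {l : ℝ} (hl : 0 ≤ l) :
    diamF K C ≤ l ↔ K - K ⊆ (l / 2) • (C - C) := by
  have hCne : C.Nonempty := hCint.mono interior_subset
  have hB : IsCompact ((l / 2) • (C - C)) := (hC.sub hC).smul (l / 2)
  have hsuppB : ∀ s, suppF ((l / 2) • (C - C)) s = l / 2 * suppF (C - C) s :=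
    suppF_smul (by positivity)
  constructor
  · intro hD z hz
    refine (mem_iff_forall_inner_le_suppF hB ((hCc.sub hCc).smul _)
      ((hCne.sub hCne).smul_set)).2 fun s => ?_
    rw [hsuppB]
    rcases eq_or_ne s 0 with rfl | hs
    · simpa using mul_nonneg (by positivity : (0:ℝ) ≤ l / 2) (suppF_sub_self_nonneg hC hCne 0)
    have hCs := suppF_sub_self_pos hC hCint hs
    have hb : breadthF K C s ≤ l := (breadthF_le_diamF hK hKne hC hCint hs).trans hD
    rw [breadthF, div_le_iff₀ hCs] at hb
    linarith [inner_le_suppF (hK.sub hK) hz s]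
  · intro hKB
    refine Real.sSup_le ?_ hl
    rintro _ ⟨s, hs, rfl⟩
    rw [breadthF, div_le_iff₀ (suppF_sub_self_pos hC hCint hs)]
    linarith [suppF_mono (hKne.sub hKne) hB hKB s, hsuppB s]

lemma sub_self_subset_smul_diamF {K C : Set (Euc n)} (hK : IsCompact K) (hKne : K.Nonempty)
    (hC : IsCompact C) (hCc : Convex ℝ C) (hCint : (interior C).Nonempty) :
    K - K ⊆ (diamF K C / 2) • (C - C) :=
  (diamF_le_iff_sub_self_subset hK hKne hC hCc hCint
    (diamF_nonneg hK hKne hC (hCint.mono interior_subset))).1 le_rfl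

lemma diamF_closure_convexHull_insert_le {K C : Set (Euc n)} (hK : IsCompact K)
    (hKne : K.Nonempty) (hC : IsCompact C) (hCc : Convex ℝ C) (hCint : (interior C).Nonempty)
    {y : Euc n} (hy : ∀ x ∈ K, y - x ∈ (diamF K C / 2) • (C - C)) :
    diamF (closure (convexHull ℝ (insert y K))) C ≤ diamF K C := by
  have hCne : C.Nonempty := hCint.mono interior_subset
  have hD : 0 ≤ diamF K C := diamF_nonneg hK hKne hC hCne
  obtain ⟨-, hK'c, hK'ne⟩ := isBody_closure_convexHull_insert hK y
  rw [diamF_le_iff_sub_self_subset hK'c hK'ne hC hCc hCint hD]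
  exact closure_convexHull_sub_self_subset ((hCc.sub hCc).smul _) ((hC.sub hC).smul _).isClosed
    (insert_sub_insert_subset (sub_self_subset_smul_diamF hK hKne hC hCc hCint)
      (zero_mem_smul_sub_self _ hCne) (neg_smul_sub_self _ _) hy)

end Diameter

/-- completeness is equivalent to the spherical intersection property
with respect to `C - C`. -/
theorem complete_iff_spherical_intersection {n : ℕ} (K C : Set (Euc n))
    (hK : IsBody K) (hC : IsBody C) (hCint : (interior C).Nonempty) :
    CompleteWrt K C ↔
      K = ⋂ x ∈ frontier K, (x +ᵥ (diamF K C / 2) • (C - C)) := by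
  obtain ⟨hKc, hKcpt, hKne⟩ := hK
  obtain ⟨hCc, hCcpt, hCne⟩ := hC
  set B := (diamF K C / 2) • (C - C)
  have hD : 0 ≤ diamF K C := diamF_nonneg hKcpt hKne hCcpt hCne
  have hKB : K - K ⊆ B := sub_self_subset_smul_diamF hKcpt hKne hCcpt hCc hCint
  have hfr : frontier K ⊆ K := hKcpt.isClosed.frontier_subset
  constructor
  · intro hcomp
    refine subset_antisymm
      (fun x hx => mem_iInter_vadd_iff.2 fun b hb => hKB (sub_mem_sub hx (hfr hb)))
      fun y hy => by_contra fun hyK => ?_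
    have hyB := forall_sub_mem_of_mem_iInter_frontier hKc hKcpt ((hCc.sub hCc).smul _)
      ((hCcpt.sub hCcpt).smul _).isClosed hy hyK
    exact (hcomp _ (isBody_closure_convexHull_insert hKcpt y)
      (ssubset_closure_convexHull_insert hyK)).not_ge
      (diamF_closure_convexHull_insert_le hKcpt hKne hCcpt hCc hCint hyB)
  · intro hSIP K' hK' hKK'
    by_contra! hle
    obtain ⟨y, hyK', hyK⟩ := exists_of_ssubset hKK'
    have hK'B : K' - K' ⊆ B :=
      (diamF_le_iff_sub_self_subset hK'.2.1 hK'.2.2 hCcpt hCc hCint hD).1 hle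
    exact hyK (hSIP ▸ mem_iInter_vadd_iff.2 fun x hx =>
      hK'B (sub_mem_sub hyK' (hKK'.subset (hfr hx))))
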